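/- Asymptotically almost surely the number of connected components of G_1^n is (1/2 + o(1))·log n; that is, for every ε > 0, the probability that | C_n / log n − 1/2 | ≤ ε tends to 1 as n → ∞, where C_n is the number of connected components of (the underlying simple graph of) G_1^n. -/

import Mathlib

open Finset

noncomputable section

/-- Sample space for the preferential attachment process `G_1^N` (0-indexed vertices):
at step `t` the new vertex `t` sends its single edge to the vertex `σ t ≤ t`
(a loop when `σ t = t`). -/
abbrev PASpace (N : ℕ) : Type := ∀ t : Fin N, Fin (t.1 + 1)

/-- The degree of vertex `s` in `G_1^t` (the graph after `t` steps), loops counted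
twice: one for its own out-edge (if `s < t`) plus the number of in-edges received. -/
def paDeg {N : ℕ} (σ : PASpace N) (s t : ℕ) : ℕ :=
  (if s < t then 1 else 0) +
    (Finset.univ.filter (fun j : Fin N => j.1 < t ∧ (σ j : ℕ) = s)).card

/-- The probability of the outcome `σ` of the preferential attachment process: at step
`t`, vertex `σ t = s < t` is chosen with probability `deg(s, t)/(2t+1)` and `σ t = t`
(a loop) with probability `1/(2t+1)` (0-indexed steps). -/
noncomputable def paWeight {N : ℕ} (σ : PASpace N) : ℝ :=
  ∏ t : Fin N,
    ((paDeg σ (σ t : ℕ) t.1 : ℝ) + (if (σ t : ℕ) = t.1 then 1 else 0)) /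
      (2 * (t.1 : ℝ) + 1)

open scoped Classical in
/-- The probability of the event `E` for the preferential attachment process `G_1^N`. -/
noncomputable def paProb (N : ℕ) (E : PASpace N → Prop) : ℝ :=
  ∑ σ : PASpace N, if E σ then paWeight σ else 0

/-- The degree of vertex `j` of the multigraph `G_m^s` (obtained from `G_1^{ms}` by
identifying consecutive blocks of `m` vertices), loops counted twice; the ambient
process runs for `m·n ≥ m·s` steps. -/
def paDegM (m n : ℕ) (σ : PASpace (m * n)) (j s : ℕ) : ℕ :=
  (Finset.univ.filter (fun t : Fin (m * n) => t.1 < m * s ∧ t.1 / m = j)).card +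
    (Finset.univ.filter (fun t : Fin (m * n) => t.1 < m * s ∧ (σ t : ℕ) / m = j)).card

/-- The number of edges (with multiplicity, loops included) of `G_m^n` with both
endpoints in `A`. -/
def paEdgesIn (m n : ℕ) (σ : PASpace (m * n)) (A : Finset ℕ) : ℕ :=
  (Finset.univ.filter
    (fun t : Fin (m * n) => t.1 / m ∈ A ∧ (σ t : ℕ) / m ∈ A)).card

/-- The modularity `q_𝒜(G_m^n)` of a partition `𝒜` of the vertex set `{0, …, n−1}` of
the multigraph `G_m^n`, which has exactly `m·n` edges. -/
noncomputable def paQ (m n : ℕ) (σ : PASpace (m * n))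
    (P : Finpartition (Finset.range n)) : ℝ :=
  ∑ A ∈ P.parts,
    ((paEdgesIn m n σ A : ℝ) / (m * n) -
      (∑ j ∈ A, (paDegM m n σ j n : ℝ)) ^ 2 / (4 * ((m : ℝ) * n) ^ 2))

/-- The modularity `q*(G_m^n)`: the maximum of `q_𝒜` over all partitions `𝒜`. -/
noncomputable def paModularity (m n : ℕ) (σ : PASpace (m * n)) : ℝ :=
  sSup {q : ℝ | ∃ P : Finpartition (Finset.range n), q = paQ m n σ P}

/-- The simple graph underlying `G_1^n`: vertices `i ≠ j` are adjacent iff the edge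
added at step `i` goes to `j` or vice versa. -/
def paGraph (n : ℕ) (σ : PASpace n) : SimpleGraph (Fin n) :=
  SimpleGraph.fromRel (fun i j => (σ i : ℕ) = j.1)

/-!
Following the edges `v_t → v_{σ t}` downwards from any vertex ends at the unique loop of its
component, so `C_n` is the number of loops. Summing out the choice of the last vertex, whose
attachment weights total `2t + 1` (the degree sum `2t` of `G_1^t`, plus one for the loop)
whatever the history, shows that the loop indicators are independent with
`P(loop at step t) = 1/(2t+1)`. Hence `C_n` has mean
`∑_{t<n} 1/(2t+1) = log n / 2 + O(1)` and variance at most its mean, and Chebyshev's inequality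
concludes.
-/

section WeightedSums

variable {Ω ι : Type*} [Fintype Ω] [Fintype ι] (w : Ω → ℝ)

lemma sum_mul_sq_sum_sub_sum_eq [DecidableEq ι] (hw : ∑ ω, w ω = 1) (I : ι → Ω → ℝ)
    (p : ι → ℝ) (hI : ∀ t, ∑ ω, w ω * I t ω = p t)
    (hII : ∀ t s, ∑ ω, w ω * (I t ω * I s ω) = if t = s then p t else p t * p s) :
    ∑ ω, w ω * (∑ t, I t ω - ∑ t, p t) ^ 2 = ∑ t, (p t - p t ^ 2) := by
  have hcov : ∀ t s, ∑ ω, w ω * ((I t ω - p t) * (I s ω - p s)) =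
      if t = s then p t - p t ^ 2 else 0 := by
    intro t s
    have : ∀ ω, w ω * ((I t ω - p t) * (I s ω - p s)) = w ω * (I t ω * I s ω)
        - p s * (w ω * I t ω) - p t * (w ω * I s ω) + p t * p s * w ω := fun ω => by ring
    simp only [this, sum_add_distrib, sum_sub_distrib, ← mul_sum, hI, hII, hw]
    split_ifs with h <;> [subst h; skip] <;> ring
  calc ∑ ω, w ω * (∑ t, I t ω - ∑ t, p t) ^ 2
      = ∑ ω, ∑ t, ∑ s, w ω * ((I t ω - p t) * (I s ω - p s)) := by
        refine sum_congr rfl fun ω _ => ?_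
        rw [← sum_sub_distrib, sq, sum_mul_sum, mul_sum]
        simp only [mul_sum]
    _ = ∑ t, ∑ s, ∑ ω, w ω * ((I t ω - p t) * (I s ω - p s)) := by
        rw [sum_comm]
        exact sum_congr rfl fun _ _ => sum_comm
    _ = ∑ t, (p t - p t ^ 2) := by simp only [hcov, sum_ite_eq, mem_univ, if_true]

-- Classical decidability of `E`: the right-hand side is then literally `paProb` for `paWeight`.
open scoped Classical in
lemma one_sub_div_sq_le_sum_ite (hw0 : ∀ ω, 0 ≤ w ω) (hw : ∑ ω, w ω = 1) (X : Ω → ℝ)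
    (m : ℝ) {a : ℝ} (ha : 0 < a) (E : Ω → Prop) (hE : ∀ ω, |X ω - m| ≤ a → E ω) :
    1 - (∑ ω, w ω * (X ω - m) ^ 2) / a ^ 2 ≤ ∑ ω, if E ω then w ω else 0 := by
  rw [← hw, sum_div, sub_le_iff_le_add, ← sum_add_distrib]
  refine sum_le_sum fun ω _ => ?_
  by_cases h : E ω
  · rw [if_pos h]
    have := hw0 ω
    linarith [show 0 ≤ w ω * (X ω - m) ^ 2 / a ^ 2 by positivity]
  · rw [if_neg h, zero_add, le_div_iff₀ (by positivity)]
    have hlt : a ^ 2 < (X ω - m) ^ 2 := by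
      rw [← sq_abs (X ω - m)]
      exact pow_lt_pow_left₀ (not_le.mp (mt (hE ω) h)) ha.le two_ne_zero
    exact mul_le_mul_of_nonneg_left hlt.le (hw0 ω)

end WeightedSums

section Components

variable {n : ℕ} (σ : PASpace n)

def paParent (i : Fin n) : Fin n := ⟨σ i, (σ i).2.trans_le i.2⟩

lemma paParent_lt {i : Fin n} (h : (σ i : ℕ) ≠ i) : (paParent σ i : ℕ) < i :=
  Nat.lt_of_le_of_ne (Nat.lt_succ_iff.mp (σ i).2) h

def paRoot (i : Fin n) : Fin n :=
  if (σ i : ℕ) = i then i else paRoot (paParent σ i)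
termination_by i.1
decreasing_by exact paParent_lt σ ‹_›

lemma paRoot_of_loop {i : Fin n} (h : (σ i : ℕ) = i) : paRoot σ i = i := by
  rw [paRoot, if_pos h]

lemma paRoot_paParent {i : Fin n} (h : (σ i : ℕ) ≠ i) : paRoot σ (paParent σ i) = paRoot σ i := by
  conv_rhs => rw [paRoot, if_neg h]

lemma paRoot_loop (i : Fin n) : (σ (paRoot σ i) : ℕ) = paRoot σ i := by
  by_cases h : (σ i : ℕ) = i
  · rwa [paRoot_of_loop σ h]
  · rw [← paRoot_paParent σ h]
    exact paRoot_loop (paParent σ i)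
termination_by i.1
decreasing_by exact paParent_lt σ h

lemma paGraph_adj_paParent {i : Fin n} (h : (σ i : ℕ) ≠ i) : (paGraph n σ).Adj i (paParent σ i) :=
  ⟨fun hi => h (congrArg Fin.val hi).symm, Or.inl rfl⟩

lemma paGraph_reachable_paRoot (i : Fin n) : (paGraph n σ).Reachable i (paRoot σ i) := by
  by_cases h : (σ i : ℕ) = i
  · rw [paRoot_of_loop σ h]
  · rw [← paRoot_paParent σ h]
    exact (paGraph_adj_paParent σ h).reachable.trans (paGraph_reachable_paRoot (paParent σ i))
termination_by i.1
decreasing_by exact paParent_lt σ h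

lemma paRoot_eq_of_adj {i j : Fin n} (hij : (paGraph n σ).Adj i j) : paRoot σ i = paRoot σ j := by
  obtain ⟨hne, hij | hji⟩ := hij
  · have hi : (σ i : ℕ) ≠ i := fun h => hne (Fin.ext (h.symm.trans hij))
    rw [← paRoot_paParent σ hi, show paParent σ i = j from Fin.ext hij]
  · have hj : (σ j : ℕ) ≠ j := fun h => hne (Fin.ext (hji.symm.trans h))
    rw [← paRoot_paParent σ hj, show paParent σ j = i from Fin.ext hji]

lemma paRoot_eq_of_reachable {i j : Fin n} (hij : (paGraph n σ).Reachable i j) :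
    paRoot σ i = paRoot σ j := by
  obtain ⟨w⟩ := hij
  induction w with
  | nil => rfl
  | cons hadj _ ih => exact (paRoot_eq_of_adj σ hadj).trans ih

def paComponentEquivLoops :
    (paGraph n σ).ConnectedComponent ≃ {i : Fin n // (σ i : ℕ) = i} where
  toFun c := c.lift (fun i => ⟨paRoot σ i, paRoot_loop σ i⟩)
    (fun _ _ p _ => Subtype.ext (paRoot_eq_of_reachable σ ⟨p⟩))
  invFun i := (paGraph n σ).connectedComponentMk i
  left_inv c := by
    induction c using SimpleGraph.ConnectedComponent.ind with | _ i =>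
    exact SimpleGraph.ConnectedComponent.eq.mpr (paGraph_reachable_paRoot σ i).symm
  right_inv i := Subtype.ext (paRoot_of_loop σ i.2)

lemma card_connectedComponent_paGraph :
    Nat.card (paGraph n σ).ConnectedComponent = #{t : Fin n | (σ t : ℕ) = t} := by
  rw [Nat.card_congr (paComponentEquivLoops σ), Nat.card_eq_fintype_card, Fintype.card_subtype]

end Components

section LoopIndependence

variable {N : ℕ}

lemma paDeg_snoc (τ : PASpace N) (x : Fin (N + 1)) (s : ℕ) {t : ℕ} (ht : t ≤ N) :
    paDeg (Fin.snoc τ x : PASpace (N + 1)) s t = paDeg τ s t := by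
  unfold paDeg
  congr 1
  rw [card_filter, card_filter, Fin.sum_univ_castSucc,
    if_neg fun h => (Fin.val_last N ▸ h.1).not_ge ht, add_zero]
  simp [Fin.snoc_castSucc]

lemma paDeg_self (τ : PASpace N) : paDeg τ N N = 0 := by
  simp only [paDeg, lt_irrefl, if_false, zero_add, card_eq_zero, filter_eq_empty_iff]
  exact fun j _ hj => by have := (τ j).2; omega

lemma sum_paDeg (τ : PASpace N) : ∑ s : Fin N, paDeg τ s N = 2 * N := by
  have hin : ∑ s : Fin N, #{j : Fin N | j.1 < N ∧ (τ j : ℕ) = s} = N := by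
    have hfib : ∀ s : Fin N, univ.filter (fun j : Fin N => j.1 < N ∧ (τ j : ℕ) = s) =
        univ.filter (fun j => paParent τ j = s) := fun s => by
      ext j
      simp [paParent, Fin.ext_iff]
    rw [sum_congr rfl fun s _ => by rw [hfib s], ← card_eq_sum_card_fiberwise (by simp),
      card_univ, Fintype.card_fin]
  simp only [paDeg, sum_add_distrib]
  rw [hin]
  simp [two_mul]

def paStepWeight (τ : PASpace N) (x : Fin (N + 1)) : ℝ :=
  (paDeg τ x N + if (x : ℕ) = N then 1 else 0) / (2 * N + 1)

lemma paWeight_snoc (τ : PASpace N) (x : Fin (N + 1)) :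
    paWeight (Fin.snoc τ x : PASpace (N + 1)) = paWeight τ * paStepWeight τ x := by
  rw [paWeight, Fin.prod_univ_castSucc, paWeight, paStepWeight]
  simp only [Fin.snoc_castSucc, Fin.snoc_last, Fin.val_castSucc, Fin.val_last,
    paDeg_snoc τ x _ le_rfl]
  congr 1
  exact prod_congr rfl fun t _ => by rw [paDeg_snoc τ x _ t.2.le]

lemma sum_paStepWeight_mul_ite (τ : PASpace N) (a b : ℝ) :
    ∑ x : Fin (N + 1), paStepWeight τ x * (if (x : ℕ) = N then a else b) =
      (a + 2 * N * b) / (2 * N + 1) := by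
  have hne : ∀ j : Fin N, (j : ℕ) ≠ N := fun j => j.2.ne
  rw [Fin.sum_univ_castSucc]
  simp only [paStepWeight, Fin.val_castSucc, Fin.val_last, hne, if_false, if_true, add_zero,
    paDeg_self, Nat.cast_zero, zero_add]
  rw [← sum_mul, ← sum_div, ← Nat.cast_sum, sum_paDeg]
  push_cast
  ring

theorem sum_paWeight_mul_prod_ite (a b : ℕ → ℝ) :
    ∑ σ : PASpace N, paWeight σ * ∏ t : Fin N, (if (σ t : ℕ) = t then a t else b t) =
      ∏ t ∈ range N, (a t + 2 * t * b t) / (2 * t + 1) := by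
  induction N with
  | zero => simp [paWeight]
  | succ N ih =>
    rw [prod_range_succ, ← ih, sum_mul,
      ← (Fin.snocEquiv fun i : Fin (N + 1) => Fin (i.1 + 1)).sum_comp,
      Fintype.sum_prod_type, sum_comm]
    refine sum_congr rfl fun τ _ => ?_
    rw [← sum_paStepWeight_mul_ite τ (a N) (b N), mul_sum]
    refine sum_congr rfl fun x _ => ?_
    simp only [Fin.snocEquiv, Equiv.coe_fn_mk, paWeight_snoc, Fin.prod_univ_castSucc,
      Fin.snoc_castSucc, Fin.snoc_last, Fin.val_castSucc, Fin.val_last]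
    ring

end LoopIndependence

section LoopMoments

variable {N : ℕ}

lemma paWeight_nonneg (σ : PASpace N) : 0 ≤ paWeight σ := by
  unfold paWeight
  positivity

lemma sum_paWeight : ∑ σ : PASpace N, paWeight σ = 1 := by
  have h := sum_paWeight_mul_prod_ite (N := N) (fun _ => 1) (fun _ => 1)
  simp only [ite_self, prod_const_one, mul_one] at h
  rw [h]
  exact prod_eq_one fun t _ => by rw [add_comm, div_self (by positivity)]

def paLoopInd (σ : PASpace N) (t : Fin N) : ℝ := if (σ t : ℕ) = t then 1 else 0

def paLoopProb (t : ℕ) : ℝ := 1 / (2 * t + 1)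

lemma paLoopInd_mul_self (σ : PASpace N) (t : Fin N) :
    paLoopInd σ t * paLoopInd σ t = paLoopInd σ t := by
  unfold paLoopInd
  split_ifs <;> norm_num

lemma sum_paWeight_mul_prod_paLoopInd (S : Finset (Fin N)) :
    ∑ σ : PASpace N, paWeight σ * ∏ t ∈ S, paLoopInd σ t = ∏ t ∈ S, paLoopProb t := by
  set S' := S.map Fin.valEmbedding
  -- with `a = 1` and `b = 1 - 1_{S'}` the product is the indicator that every step in `S` is a loop
  have h := sum_paWeight_mul_prod_ite (N := N) (fun _ => 1) (fun u => if u ∈ S' then 0 else 1)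
  have hlhs : ∀ σ : PASpace N, ∏ t : Fin N,
      (if (σ t : ℕ) = t then (1 : ℝ) else if (t : ℕ) ∈ S' then 0 else 1) =
        ∏ t ∈ S, paLoopInd σ t := fun σ => by
    rw [← univ_inter S, ← prod_ite_mem]
    refine prod_congr rfl fun t _ => ?_
    simp only [S', mem_map, Fin.valEmbedding_apply, Fin.val_inj, exists_eq_right, paLoopInd]
    split_ifs <;> rfl
  have hrhs : ∏ t ∈ range N, (1 + 2 * t * (if t ∈ S' then 0 else 1)) / (2 * (t : ℝ) + 1) =
      ∏ t ∈ S, paLoopProb t := by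
    have hS' : S' ⊆ range N := fun u hu => by
      obtain ⟨t, -, rfl⟩ := mem_map.mp hu
      exact mem_range.mpr t.2
    calc _ = ∏ t ∈ range N, if t ∈ S' then paLoopProb t else 1 := prod_congr rfl fun t _ => by
          split_ifs
          · rw [mul_zero, add_zero, paLoopProb]
          · rw [mul_one, add_comm, div_self (by positivity)]
      _ = ∏ t ∈ S, paLoopProb t := by rw [prod_ite_mem, inter_eq_right.mpr hS', prod_map]; rfl
  simpa only [hlhs, hrhs] using h

lemma sum_paWeight_mul_paLoopInd (t : Fin N) :
    ∑ σ : PASpace N, paWeight σ * paLoopInd σ t = paLoopProb t := by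
  simpa using sum_paWeight_mul_prod_paLoopInd {t}

lemma sum_paWeight_mul_paLoopInd_mul (t s : Fin N) :
    ∑ σ : PASpace N, paWeight σ * (paLoopInd σ t * paLoopInd σ s) =
      if t = s then paLoopProb t else paLoopProb t * paLoopProb s := by
  split_ifs with h
  · subst h
    simp only [paLoopInd_mul_self, sum_paWeight_mul_paLoopInd]
  · simpa [prod_pair h] using sum_paWeight_mul_prod_paLoopInd {t, s}

lemma sum_paWeight_mul_sq_sum_paLoopInd_sub_le :
    ∑ σ : PASpace N, paWeight σ * (∑ t, paLoopInd σ t - ∑ t : Fin N, paLoopProb t) ^ 2 ≤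
      ∑ t : Fin N, paLoopProb t := by
  rw [sum_mul_sq_sum_sub_sum_eq paWeight sum_paWeight (fun t σ => paLoopInd σ t) _
    sum_paWeight_mul_paLoopInd sum_paWeight_mul_paLoopInd_mul]
  exact sum_le_sum fun t _ => sub_le_self _ (sq_nonneg _)

end LoopMoments

lemma log_div_two_le_sum_paLoopProb (N : ℕ) :
    Real.log N / 2 ≤ ∑ t ∈ range N, paLoopProb t := by
  rcases N.eq_zero_or_pos with rfl | hN
  · simp
  have hlog : Real.log N ≤ harmonic N := by
    refine (Real.log_le_log (by positivity) ?_).trans (log_add_one_le_harmonic N)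
    push_cast
    linarith
  have hterm : ∀ t ∈ range N, ((t + 1 : ℕ) : ℝ)⁻¹ / 2 ≤ paLoopProb t := fun t _ => by
    rw [paLoopProb, inv_eq_one_div, div_div]
    gcongr
    push_cast
    linarith
  simp only [harmonic, Rat.cast_sum, Rat.cast_inv, Rat.cast_natCast] at hlog
  linarith [sum_div (range N) (fun t => ((t + 1 : ℕ) : ℝ)⁻¹) 2, sum_le_sum hterm]

lemma sum_paLoopProb_le {N : ℕ} (hN : 1 ≤ N) :
    ∑ t ∈ range N, paLoopProb t ≤ Real.log N / 2 + 3 / 2 := by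
  obtain ⟨M, rfl⟩ := Nat.exists_eq_add_of_le' hN
  have hlog : (harmonic M : ℝ) ≤ 1 + Real.log (M + 1) := by
    refine (harmonic_le_one_add_log M).trans ?_
    rcases M.eq_zero_or_pos with rfl | hM
    · simp
    · gcongr
      linarith
  have hterm : ∀ t ∈ range M, paLoopProb (t + 1) ≤ ((t + 1 : ℕ) : ℝ)⁻¹ / 2 := fun t _ => by
    rw [paLoopProb, inv_eq_one_div, div_div]
    gcongr
    push_cast
    linarith
  simp only [harmonic, Rat.cast_sum, Rat.cast_inv, Rat.cast_natCast] at hlog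
  rw [sum_range_succ']
  push_cast
  linarith [sum_div (range M) (fun t => ((t + 1 : ℕ) : ℝ)⁻¹) 2, sum_le_sum hterm,
    show paLoopProb 0 = 1 by norm_num [paLoopProb]]

lemma card_connectedComponent_paGraph_eq_sum_paLoopInd {n : ℕ} (σ : PASpace n) :
    (Nat.card (paGraph n σ).ConnectedComponent : ℝ) = ∑ t, paLoopInd σ t := by
  rw [card_connectedComponent_paGraph, card_filter]
  push_cast
  rfl

lemma paProb_le_one {N : ℕ} (E : PASpace N → Prop) : paProb N E ≤ 1 := by
  rw [paProb, ← sum_paWeight]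
  exact sum_le_sum fun σ _ => by split_ifs; exacts [le_rfl, paWeight_nonneg σ]

lemma one_sub_le_paProb_abs_card_div_log_sub_le {n : ℕ} {ε : ℝ} (hε : 0 < ε)
    (hlog : 3 / ε ≤ Real.log n) (hlog_one : 1 ≤ Real.log n) :
    1 - 8 / (ε ^ 2 * Real.log n) ≤ paProb n (fun σ =>
      |(Nat.card (paGraph n σ).ConnectedComponent : ℝ) / Real.log n - 1 / 2| ≤ ε) := by
  set l := Real.log n
  set μ := ∑ t : Fin n, paLoopProb t
  have hl : 0 < l := one_pos.trans_le hlog_one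
  have hn : 1 ≤ n := Nat.one_le_iff_ne_zero.mpr fun h => by simp [l, h] at hl
  have hεl : 3 ≤ ε * l := by rwa [div_le_iff₀ hε, mul_comm] at hlog
  have hμ : |μ - l / 2| ≤ 3 / 2 := by
    have hsum : μ = ∑ t ∈ range n, paLoopProb t := Fin.sum_univ_eq_sum_range paLoopProb n
    rw [abs_le, hsum]
    constructor <;> linarith [log_div_two_le_sum_paLoopProb n, sum_paLoopProb_le hn]
  have hvar : (∑ σ : PASpace n, paWeight σ * (∑ t, paLoopInd σ t - μ) ^ 2) / (ε / 2 * l) ^ 2 ≤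
      8 / (ε ^ 2 * l) := by
    rw [div_le_div_iff₀ (by positivity) (by positivity)]
    have hμ2 : μ ≤ 2 * l := by linarith [(abs_le.mp hμ).2]
    calc _ ≤ 2 * l * (ε ^ 2 * l) := by
          gcongr
          exact sum_paWeight_mul_sq_sum_paLoopInd_sub_le.trans hμ2
      _ = 8 * (ε / 2 * l) ^ 2 := by ring
  have hincl : ∀ σ : PASpace n, |∑ t, paLoopInd σ t - μ| ≤ ε / 2 * l →
      |(Nat.card (paGraph n σ).ConnectedComponent : ℝ) / l - 1 / 2| ≤ ε := fun σ hσ => by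
    rw [card_connectedComponent_paGraph_eq_sum_paLoopInd,
      show ∀ x : ℝ, x / l - 1 / 2 = ((x - μ) + (μ - l / 2)) / l from fun x => by field_simp; ring,
      abs_div, abs_of_pos hl, div_le_iff₀ hl]
    linarith [abs_add_le (∑ t, paLoopInd σ t - μ) (μ - l / 2)]
  calc 1 - 8 / (ε ^ 2 * l)
      ≤ 1 - (∑ σ : PASpace n, paWeight σ * (∑ t, paLoopInd σ t - μ) ^ 2) / (ε / 2 * l) ^ 2 := by
        linarith
    _ ≤ _ := one_sub_div_sq_le_sum_ite paWeight paWeight_nonneg sum_paWeight _ μ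
        (by positivity) _ hincl

open Filter Topology

/-- a.a.s. the number of connected components of `G_1^n` is
`(1/2 + o(1))·log n`: for every `ε > 0`, the probability that
`|C_n/log n − 1/2| ≤ ε` tends to `1` as `n → ∞`. -/
theorem statement15 :
    ∀ ε : ℝ, 0 < ε →
      Filter.Tendsto
        (fun n : ℕ => paProb n
          (fun σ =>
            |(Nat.card (paGraph n σ).ConnectedComponent : ℝ) / Real.log n - 1 / 2| ≤ ε))
        Filter.atTop (nhds 1) := by
  intro ε hε
  have hlog : Tendsto (fun n : ℕ => Real.log n) atTop atTop :=
    Real.tendsto_log_atTop.comp tendsto_natCast_atTop_atTop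
  have hbound : Tendsto (fun n : ℕ => 1 - 8 / (ε ^ 2 * Real.log n)) atTop (𝓝 1) := by
    simpa using tendsto_const_nhds.sub
      (tendsto_const_nhds.div_atTop (hlog.const_mul_atTop (by positivity)))
  refine tendsto_of_tendsto_of_tendsto_of_le_of_le' hbound tendsto_const_nhds ?_
    (Eventually.of_forall fun n => paProb_le_one _)
  filter_upwards [hlog.eventually_ge_atTop (max (3 / ε) 1)] with n hl
  exact one_sub_le_paProb_abs_card_div_log_sub_le hε (le_of_max_le_left hl)
    (le_of_max_le_right hl)

end
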